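/- arXiv:2411.02213 — 3 statements merged into one kernel-verified Lean document; each statement's English description precedes it below -/
import Mathlib

section
/- The derivative at ε = 0 of the curve ε ↦ R^{p+εv} of reflections equals 2(t + t*), where t(x) = (⟨x,p⟩/⟨p,p⟩)v and t*(x) = (⟨x,v⟩/⟨p,p⟩)p. -/
/-! Put `q = p + εv`. As `ε` is real and `⟨v,p⟩ = 0`, `⟨q,q⟩ = ⟨p,p⟩ + ε²⟨v,v⟩` is stationary at
`ε = 0`, while the rank-one map `x ↦ ⟨x,q⟩ q` is quadratic in `ε` with linear coefficient
`x ↦ ⟨x,p⟩ v + ⟨x,v⟩ p`. Hence `R^q = (2/⟨q,q⟩) (x ↦ ⟨x,q⟩ q) - 1` has derivative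
`(2/⟨p,p⟩) (x ↦ ⟨x,p⟩ v + ⟨x,v⟩ p) = 2(t + t*)` at `ε = 0`. -/

theorem hasDerivAt_add_smul_add_sq_smul {E : Type*} [NormedAddCommGroup E] [NormedSpace ℝ E]
    (a b c : E) : HasDerivAt (fun ε : ℝ => a + ε • b + ε ^ 2 • c) b 0 := by
  convert (((hasDerivAt_id (0 : ℝ)).smul_const b).const_add a).add
    ((hasDerivAt_pow 2 (0 : ℝ)).smul_const c) using 1
  · rfl
  · simp

namespace LinearMap

variable {V : Type*} [NormedAddCommGroup V] [NormedSpace ℂ V]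

def ofHermitian (B : V → V → ℂ) (hadd : ∀ x y z : V, B (x + y) z = B x z + B y z)
    (hsmul : ∀ (a : ℂ) (x y : V), B (a • x) y = a * B x y)
    (hconj : ∀ x y : V, B x y = starRingEnd ℂ (B y x)) : V →ₗ[ℂ] V →ₗ⋆[ℂ] ℂ :=
  mk₂'ₛₗ (RingHom.id ℂ) (starRingEnd ℂ) B hadd hsmul
    (fun x y z => by rw [hconj, hadd, map_add, ← hconj, ← hconj])
    (fun a x y => by rw [hconj, hsmul, map_mul, ← hconj]; rfl)

@[simp]
theorem ofHermitian_apply (B : V → V → ℂ) (hadd : ∀ x y z : V, B (x + y) z = B x z + B y z)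
    (hsmul : ∀ (a : ℂ) (x y : V), B (a • x) y = a * B x y)
    (hconj : ∀ x y : V, B x y = starRingEnd ℂ (B y x)) (x y : V) :
    ofHermitian B hadd hsmul hconj x y = B x y :=
  rfl

theorem apply_add_ofReal_smul (S : V →ₗ[ℂ] V →ₗ⋆[ℂ] ℂ) (p v : V) (ε : ℝ) :
    S (p + (ε : ℂ) • v) (p + (ε : ℂ) • v) = S p p + ε • (S p v + S v p) + ε ^ 2 • S v v := by
  simp only [map_add, map_smul, map_smulₛₗ, add_apply, smul_apply, Complex.conj_ofReal,
    smul_eq_mul, Complex.real_smul]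
  push_cast
  ring

variable [FiniteDimensional ℂ V]

noncomputable def rankOne (S : V →ₗ[ℂ] V →ₗ⋆[ℂ] ℂ) (a b : V) : V →L[ℂ] V :=
  (toContinuousLinearMap (S.flip a)).smulRight b

@[simp]
theorem rankOne_apply (S : V →ₗ[ℂ] V →ₗ⋆[ℂ] ℂ) (a b x : V) : S.rankOne a b x = S x a • b :=
  rfl

theorem rankOne_add_ofReal_smul (S : V →ₗ[ℂ] V →ₗ⋆[ℂ] ℂ) (p v : V) (ε : ℝ) :
    S.rankOne (p + (ε : ℂ) • v) (p + (ε : ℂ) • v) =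
      S.rankOne p p + ε • (S.rankOne p v + S.rankOne v p) + ε ^ 2 • S.rankOne v v := by
  ext x
  simp only [rankOne_apply, map_add, map_smulₛₗ, Complex.conj_ofReal, _root_.add_apply,
    _root_.smul_apply, smul_eq_mul]
  match_scalars <;> simp; ring

noncomputable def sesqReflection (S : V →ₗ[ℂ] V →ₗ⋆[ℂ] ℂ) (q : V) : V →L[ℂ] V :=
  (2 / S q q) • S.rankOne q q - 1

theorem sesqReflection_apply (S : V →ₗ[ℂ] V →ₗ⋆[ℂ] ℂ) (q x : V) :
    S.sesqReflection q x = (2 * (S x q / S q q)) • q - x := by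
  simp [sesqReflection, smul_smul, div_mul_eq_mul_div, mul_div_assoc]

theorem hasDerivAt_sesqReflection_add_ofReal_smul (S : V →ₗ[ℂ] V →ₗ⋆[ℂ] ℂ) {p v : V}
    (hp : S p p ≠ 0) (hpv : S p v = 0) (hvp : S v p = 0) :
    HasDerivAt (fun ε : ℝ => S.sesqReflection (p + (ε : ℂ) • v))
      ((2 / S p p) • (S.rankOne p v + S.rankOne v p)) 0 := by
  have hN : HasDerivAt (fun ε : ℝ => S (p + (ε : ℂ) • v) (p + (ε : ℂ) • v)) 0 0 := by
    simpa only [apply_add_ofReal_smul, hpv, hvp, add_zero, smul_zero] using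
      hasDerivAt_add_smul_add_sq_smul (S p p) (S p v + S v p) (S v v)
  have hP : HasDerivAt (fun ε : ℝ => S.rankOne (p + (ε : ℂ) • v) (p + (ε : ℂ) • v))
      (S.rankOne p v + S.rankOne v p) 0 := by
    simpa only [rankOne_add_ofReal_smul] using hasDerivAt_add_smul_add_sq_smul
      (S.rankOne p p) (S.rankOne p v + S.rankOne v p) (S.rankOne v v)
  have hc := (hasDerivAt_const (0 : ℝ) (2 : ℂ)).div hN (by simpa using hp)
  refine ((hc.smul hP).sub_const 1).congr_deriv ?_
  simp

end LinearMap

/-- The derivative at `ε = 0` of the curve `ε ↦ R^{p+εv}` of reflections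
equals `2(t + t*)`, where `t(x) = (⟨x,p⟩/⟨p,p⟩)v` and `t*(x) = (⟨x,v⟩/⟨p,p⟩)p`; the
derivative is taken in the real normed space of continuous ℂ-linear endomorphisms. -/
theorem deriv_of_reflection_curve
    (V : Type*) [NormedAddCommGroup V] [NormedSpace ℂ V] [FiniteDimensional ℂ V]
    (B : V → V → ℂ)
    (hadd : ∀ x y z : V, B (x + y) z = B x z + B y z)
    (hsmul : ∀ (a : ℂ) (x y : V), B (a • x) y = a * B x y)
    (hconj : ∀ x y : V, B x y = starRingEnd ℂ (B y x))
    (p v : V) (hp : B p p ≠ 0) (hv : B v p = 0)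
    (R : ℝ → (V →L[ℂ] V))
    (hR : ∀ (ε : ℝ) (x : V), R ε x =
      (2 * (B x (p + (ε : ℂ) • v) / B (p + (ε : ℂ) • v) (p + (ε : ℂ) • v)))
        • (p + (ε : ℂ) • v) - x)
    (t ts : V →L[ℂ] V)
    (ht : ∀ x, t x = (B x p / B p p) • v)
    (hts : ∀ x, ts x = (B x v / B p p) • p) :
    HasDerivAt R ((2 : ℝ) • (t + ts)) 0 := by
  set S := LinearMap.ofHermitian B hadd hsmul hconj
  have hpv : B p v = 0 := by rw [hconj, hv, map_zero]
  have hR_eq : R = fun ε : ℝ => S.sesqReflection (p + (ε : ℂ) • v) := by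
    ext ε x
    exact (hR ε x).trans (S.sesqReflection_apply _ x).symm
  have hderiv : (2 / S p p) • (S.rankOne p v + S.rankOne v p) = (2 : ℝ) • (t + ts) := by
    ext x
    simp only [smul_apply, add_apply, LinearMap.rankOne_apply, LinearMap.ofHermitian_apply, S,
      ht, hts]
    match_scalars <;> simp <;> ring
  rw [hR_eq, ← hderiv]
  exact S.hasDerivAt_sesqReflection_add_ofReal_smul hp hpv hv
end

section
/- There is no relation R^{p₅}R^{p₄}R^{p₃}R^{p₂}R^{p₁} = Id in SU(2,1) with p₁ positive and p₂,p₃,p₄,p₅ negative and all points pairwise non-orthogonal with pairwise tances ≠ 1: if R^{p₅}R^{p₄}R^{p₃}R^{p₂}R^{p₁} = Id then tr(R^{p₃}R^{p₂}R^{p₁}) = tr(R^{p₄}R^{p₅}), which is real and positive, contradicting the sign configuration. Formally: if σp₁ = +1, σp₂ = σp₃ = −1 and tr(R^{p₃}R^{p₂}R^{p₁}) is a real number with Re(tr) > −1, and p₁,p₂,p₃ are linearly independent, then a contradiction follows from det of the Gram matrix being negative. -/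
/-!
Writing each reflection as `R^p = 2 P_p - 1` with `P_p` the rank-one projection
`x ↦ (⟨x,p⟩/⟨p,p⟩) p` and expanding, the trace of `R^{p₃}R^{p₂}R^{p₁}` is a polynomial in the
normalised Hermitian products, and `(Re tr + 1)⟨p₁,p₁⟩⟨p₂,p₂⟩⟨p₃,p₃⟩` turns out to be four times
the Gram determinant of `p₁, p₂, p₃`. That determinant equals `-|det [p₁ p₂ p₃]|² ≤ 0` because
the form has signature `−++`, while the sign hypotheses make the left-hand side positive.
-/

/-- The standard Hermitian form of signature `−++` on `ℂ³`. -/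
noncomputable def hermForm (x y : Fin 3 → ℂ) : ℂ :=
  -(x 0 * star (y 0)) + x 1 * star (y 1) + x 2 * star (y 2)

namespace LinearMap

variable {R M : Type*} [CommRing R] [AddCommGroup M] [Module R M] [Module.Free R M]
  [Module.Finite R M]

lemma trace_smulRight_comp (f : M →ₗ[R] R) (v : M) (g : M →ₗ[R] M) :
    trace R M (f.smulRight v ∘ₗ g) = f (g v) :=
  trace_smulRight (f ∘ₗ g) v

lemma trace_comp_three_reflections (f₁ f₂ f₃ : M →ₗ[R] R) (v₁ v₂ v₃ : M) :
    trace R M ((2 • f₃.smulRight v₃ - id) ∘ₗ (2 • f₂.smulRight v₂ - id) ∘ₗ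
        (2 • f₁.smulRight v₁ - id)) =
      8 * (f₁ v₃ * f₂ v₁ * f₃ v₂) - 4 * (f₁ v₂ * f₂ v₁ + f₁ v₃ * f₃ v₁ + f₂ v₃ * f₃ v₂)
        + 2 * (f₁ v₁ + f₂ v₂ + f₃ v₃) - Module.finrank R M := by
  set P₁ := f₁.smulRight v₁
  set P₂ := f₂.smulRight v₂
  set P₃ := f₃.smulRight v₃
  have expand : (2 • P₃ - id) ∘ₗ (2 • P₂ - id) ∘ₗ (2 • P₁ - id) =
      8 • (P₃ ∘ₗ P₂ ∘ₗ P₁) - 4 • (P₃ ∘ₗ P₂ + P₃ ∘ₗ P₁ + P₂ ∘ₗ P₁) + 2 • (P₁ + P₂ + P₃) - id := by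
    change (2 • P₃ - 1) * (2 • P₂ - 1) * (2 • P₁ - 1) =
      8 • (P₃ * P₂ * P₁) - 4 • (P₃ * P₂ + P₃ * P₁ + P₂ * P₁) + 2 • (P₁ + P₂ + P₃) - 1
    noncomm_ring
  rw [expand]
  simp only [map_sub, map_add, map_nsmul, trace_id]
  simp only [P₁, P₂, P₃, trace_smulRight_comp, trace_smulRight, comp_apply, smulRight_apply,
    map_smul, smul_eq_mul, nsmul_eq_mul]
  ring

end LinearMap

lemma hermForm_swap (x y : Fin 3 → ℂ) : hermForm y x = star (hermForm x y) := by
  simp only [hermForm, star_add, star_neg, star_mul, star_star]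

lemma ofReal_re_hermForm_self (x : Fin 3 → ℂ) : ((hermForm x x).re : ℂ) = hermForm x x :=
  Complex.conj_eq_iff_re.mp (hermForm_swap x x).symm

noncomputable def hermFormLeft (p : Fin 3 → ℂ) : (Fin 3 → ℂ) →ₗ[ℂ] ℂ where
  toFun x := hermForm x p
  map_add' x y := by simp only [hermForm, Pi.add_apply]; ring
  map_smul' c x := by simp only [hermForm, Pi.smul_apply, smul_eq_mul, RingHom.id_apply]; ring

noncomputable def reflection (p : Fin 3 → ℂ) : (Fin 3 → ℂ) →ₗ[ℂ] (Fin 3 → ℂ) :=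
  2 • ((hermForm p p)⁻¹ • hermFormLeft p).smulRight p - LinearMap.id

lemma reflection_apply (p x : Fin 3 → ℂ) :
    reflection p x = (2 * (hermForm x p / hermForm p p)) • p - x := by
  simp [reflection, hermFormLeft, div_eq_inv_mul, mul_smul, two_smul]

lemma eq_reflection_of_apply {R : (Fin 3 → ℂ) →ₗ[ℂ] (Fin 3 → ℂ)} {p : Fin 3 → ℂ}
    (h : ∀ x, R x = (2 * (hermForm x p / hermForm p p)) • p - x) : R = reflection p :=
  LinearMap.ext fun x => (h x).trans (reflection_apply p x).symm

lemma trace_reflection_comp_mul (p₁ p₂ p₃ : Fin 3 → ℂ) (h₁ : hermForm p₁ p₁ ≠ 0)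
    (h₂ : hermForm p₂ p₂ ≠ 0) (h₃ : hermForm p₃ p₃ ≠ 0) :
    LinearMap.trace ℂ _ (reflection p₃ ∘ₗ reflection p₂ ∘ₗ reflection p₁) *
        (hermForm p₁ p₁ * hermForm p₂ p₂ * hermForm p₃ p₃) =
      8 * (hermForm p₃ p₁ * hermForm p₁ p₂ * hermForm p₂ p₃)
        - 4 * (hermForm p₃ p₃ * (hermForm p₁ p₂ * hermForm p₂ p₁)
          + hermForm p₂ p₂ * (hermForm p₁ p₃ * hermForm p₃ p₁)
          + hermForm p₁ p₁ * (hermForm p₂ p₃ * hermForm p₃ p₂))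
        + 3 * (hermForm p₁ p₁ * hermForm p₂ p₂ * hermForm p₃ p₃) := by
  rw [reflection, reflection, reflection, LinearMap.trace_comp_three_reflections]
  simp only [LinearMap.smul_apply, hermFormLeft, LinearMap.coe_mk, AddHom.coe_mk, smul_eq_mul,
    Module.finrank_fin_fun]
  field_simp
  ring

open scoped Matrix

noncomputable def hermFormGram (v : Fin 3 → Fin 3 → ℂ) : Matrix (Fin 3) (Fin 3) ℂ :=
  Matrix.of fun i j => hermForm (v i) (v j)

lemma hermFormGram_eq (v : Fin 3 → Fin 3 → ℂ) :
    hermFormGram v = Matrix.of v * Matrix.diagonal ![-1, 1, 1] * (Matrix.of v)ᴴ := by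
  ext i j
  simp [hermFormGram, Matrix.mul_apply, Fin.sum_univ_three, hermForm]

lemma det_hermFormGram (v : Fin 3 → Fin 3 → ℂ) :
    (hermFormGram v).det = -((Matrix.of v).det * star (Matrix.of v).det) := by
  simp [hermFormGram_eq, Matrix.det_mul, Matrix.det_conjTranspose, Fin.prod_univ_three]

lemma re_trace_reflection_comp_add_one_mul (p₁ p₂ p₃ : Fin 3 → ℂ) (h₁ : hermForm p₁ p₁ ≠ 0)
    (h₂ : hermForm p₂ p₂ ≠ 0) (h₃ : hermForm p₃ p₃ ≠ 0) :
    ((LinearMap.trace ℂ _ (reflection p₃ ∘ₗ reflection p₂ ∘ₗ reflection p₁)).re + 1) *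
        ((hermForm p₁ p₁).re * (hermForm p₂ p₂).re * (hermForm p₃ p₃).re) =
      -4 * Complex.normSq (Matrix.of ![p₁, p₂, p₃]).det := by
  set T := LinearMap.trace ℂ _ (reflection p₃ ∘ₗ reflection p₂ ∘ₗ reflection p₁)
  set d := (Matrix.of ![p₁, p₂, p₃]).det
  set w := star (hermForm p₁ p₃) * hermForm p₁ p₂ * hermForm p₂ p₃
  have htrace := trace_reflection_comp_mul p₁ p₂ p₃ h₁ h₂ h₃
  have hgram := det_hermFormGram ![p₁, p₂, p₃]
  rw [Matrix.det_fin_three] at hgram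
  simp only [hermFormGram, Matrix.of_apply, Matrix.cons_val] at hgram
  rw [hermForm_swap p₁ p₂, hermForm_swap p₁ p₃, hermForm_swap p₂ p₃] at htrace hgram
  -- `w - star w` is purely imaginary, so only the Gram determinant survives in the real part.
  have key : (T + 1) * ((hermForm p₁ p₁).re * (hermForm p₂ p₂).re * (hermForm p₃ p₃).re : ℝ) =
      -4 * (d * star d) + 4 * (w - star w) := by
    push_cast
    simp only [ofReal_re_hermForm_self, w, star_mul', star_star]
    linear_combination htrace + 4 * hgram
  have hre := congrArg Complex.re key
  simp only [Complex.star_def] at hre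
  rw [Complex.re_mul_ofReal, Complex.mul_conj, Complex.sub_conj] at hre
  simpa using hre

theorem no_trace_right_of_line_general
    (p₁ p₂ p₃ : Fin 3 → ℂ)
    (h₁ : 0 < (hermForm p₁ p₁).re)
    (h₂ : (hermForm p₂ p₂).re < 0)
    (h₃ : (hermForm p₃ p₃).re < 0)
    (R₁ R₂ R₃ : (Fin 3 → ℂ) →ₗ[ℂ] (Fin 3 → ℂ))
    (hR₁ : ∀ x, R₁ x = (2 * (hermForm x p₁ / hermForm p₁ p₁)) • p₁ - x)
    (hR₂ : ∀ x, R₂ x = (2 * (hermForm x p₂ / hermForm p₂ p₂)) • p₂ - x)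
    (hR₃ : ∀ x, R₃ x = (2 * (hermForm x p₃ / hermForm p₃ p₃)) • p₃ - x)
    (htr : -1 < (LinearMap.trace ℂ (Fin 3 → ℂ) (R₃ ∘ₗ R₂ ∘ₗ R₁)).re) :
    False := by
  obtain rfl := eq_reflection_of_apply hR₁
  obtain rfl := eq_reflection_of_apply hR₂
  obtain rfl := eq_reflection_of_apply hR₃
  have hgram := re_trace_reflection_comp_add_one_mul p₁ p₂ p₃
    (ne_of_apply_ne Complex.re h₁.ne') (ne_of_apply_ne Complex.re h₂.ne)
    (ne_of_apply_ne Complex.re h₃.ne)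
  have hpos := mul_pos (neg_lt_iff_pos_add.mp htr)
    (mul_pos_of_neg_of_neg (mul_neg_of_pos_of_neg h₁ h₂) h₃)
  rw [hgram] at hpos
  linarith [Complex.normSq_nonneg (Matrix.of ![p₁, p₂, p₃]).det]

/-- If `σp₁ = +1`, `σp₂ = σp₃ = −1`, `p₁,p₂,p₃` are linearly independent,
and the trace of `R^{p₃}R^{p₂}R^{p₁}` is a real number with real part `> −1`, then we
get a contradiction (since the Gram determinant must be negative). -/
theorem no_trace_right_of_line
    (p₁ p₂ p₃ : Fin 3 → ℂ)
    (h₁im : (hermForm p₁ p₁).im = 0) (h₁ : 0 < (hermForm p₁ p₁).re)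
    (h₂im : (hermForm p₂ p₂).im = 0) (h₂ : (hermForm p₂ p₂).re < 0)
    (h₃im : (hermForm p₃ p₃).im = 0) (h₃ : (hermForm p₃ p₃).re < 0)
    (hind : LinearIndependent ℂ ![p₁, p₂, p₃])
    (R₁ R₂ R₃ : (Fin 3 → ℂ) →ₗ[ℂ] (Fin 3 → ℂ))
    (hR₁ : ∀ x, R₁ x = (2 * (hermForm x p₁ / hermForm p₁ p₁)) • p₁ - x)
    (hR₂ : ∀ x, R₂ x = (2 * (hermForm x p₂ / hermForm p₂ p₂)) • p₂ - x)
    (hR₃ : ∀ x, R₃ x = (2 * (hermForm x p₃ / hermForm p₃ p₃)) • p₃ - x)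
    (htr_real : (LinearMap.trace ℂ (Fin 3 → ℂ) (R₃ ∘ₗ R₂ ∘ₗ R₁)).im = 0)
    (htr : -1 < (LinearMap.trace ℂ (Fin 3 → ℂ) (R₃ ∘ₗ R₂ ∘ₗ R₁)).re) :
    False :=
  no_trace_right_of_line_general p₁ p₂ p₃ h₁ h₂ h₃ R₁ R₂ R₃ hR₁ hR₂ hR₃ htr
end

section
/- Fix a real number s satisfying the equation s₁²s₂ + s₁s₂² − 2s₁s₂s + s² + (2Re κ)s₁s₂ + (Im κ)² = 0 and the inequalities σ₁σ₂s₁ > max(0, σ₁σ₂), σ₂σ₃s₂ > max(0, σ₂σ₃), σ₁σ₂σ₃(2Re κ + 1) < 0, where σᵢ ∈ {±1} with at most one +1. Then the Hermitian 3×3 matrix G with g₁₁ = σ₁, g₂₂ = σ₂, g₃₃ = σ₃, g₁₂ = g₂₁ = √(σ₁σ₂s₁), g₂₃ = g₃₂ = √(σ₂σ₃s₂), g₁₃ = σ₁σ₂σ₃(s − i·Im κ)/(√(σ₁σ₂s₁)√(σ₂σ₃s₂)), g₃₁ = conj(g₁₃), has negative determinant. -/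
/-! Since `g₁₂ g₂₃ g₃₁ = σ₁σ₂σ₃ (s + i Im κ)`, expanding the Hermitian determinant gives
`det G = σ₁σ₂σ₃ (1 + 2s - s₁ - s₂ - (s² + (Im κ)²) / (s₁ s₂))`, and the surface equation says
exactly that `(s² + (Im κ)²) / (s₁ s₂) = 2s - s₁ - s₂ - 2 Re κ`. Hence
`det G = σ₁σ₂σ₃ (2 Re κ + 1) < 0`. -/

open Complex
open scoped ComplexConjugate

theorem Matrix.det_fin_three_of_real_offDiag (x y z a b : ℝ) (c : ℂ) :
    (!![(x : ℂ), a, c; a, y, b; conj c, b, z]).det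
      = ((x * y * z - x * b ^ 2 - z * a ^ 2 - y * normSq c + 2 * a * b * c.re : ℝ) : ℂ) := by
  apply Complex.ext <;> simp [Matrix.det_fin_three, normSq_apply, sq] <;> ring

theorem Matrix.det_fin_three_of_real_offDiag_div (x y z a b : ℝ) (w : ℂ) (ha : a ≠ 0)
    (hb : b ≠ 0) :
    (!![(x : ℂ), a, w / (a * b); a, y, b; conj (w / (a * b)), b, z]).det
      = ((x * y * z - x * b ^ 2 - z * a ^ 2 - y * (normSq w / (a * b) ^ 2) + 2 * w.re : ℝ) :
        ℂ) := by
  rw [Matrix.det_fin_three_of_real_offDiag, ← ofReal_mul, map_div₀, normSq_ofReal, div_ofReal_re]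
  congr 1
  field_simp

theorem candidate_gram_matrix_det_neg_general
    (σ₁ σ₂ σ₃ : ℝ)
    (hσ₁ : σ₁ = 1 ∨ σ₁ = -1) (hσ₂ : σ₂ = 1 ∨ σ₂ = -1) (hσ₃ : σ₃ = 1 ∨ σ₃ = -1)
    (κ : ℂ) (s₁ s₂ s : ℝ)
    (heq : s₁ ^ 2 * s₂ + s₁ * s₂ ^ 2 - 2 * s₁ * s₂ * s + s ^ 2
      + (2 * κ.re) * s₁ * s₂ + (κ.im) ^ 2 = 0)
    (h₁ : σ₁ * σ₂ * s₁ > max 0 (σ₁ * σ₂))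
    (h₂ : σ₂ * σ₃ * s₂ > max 0 (σ₂ * σ₃))
    (h₃ : σ₁ * σ₂ * σ₃ * (2 * κ.re + 1) < 0)
    (g₁₂ g₂₃ : ℝ) (hg₁₂ : g₁₂ = Real.sqrt (σ₁ * σ₂ * s₁))
    (hg₂₃ : g₂₃ = Real.sqrt (σ₂ * σ₃ * s₂))
    (g₁₃ : ℂ)
    (hg₁₃ : g₁₃ = ((σ₁ * σ₂ * σ₃ : ℝ) : ℂ) * ((s : ℂ) - (κ.im : ℂ) * Complex.I)
      / ((g₁₂ : ℂ) * (g₂₃ : ℂ)))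
    (G : Matrix (Fin 3) (Fin 3) ℂ)
    (hG : G = !![(σ₁ : ℂ), (g₁₂ : ℂ), g₁₃;
                 (g₁₂ : ℂ), (σ₂ : ℂ), (g₂₃ : ℂ);
                 starRingEnd ℂ g₁₃, (g₂₃ : ℂ), (σ₃ : ℂ)]) :
    G.det.im = 0 ∧ G.det.re < 0 := by
  have hs₁ : 0 < σ₁ * σ₂ * s₁ := (le_max_left _ _).trans_lt h₁
  have hs₂ : 0 < σ₂ * σ₃ * s₂ := (le_max_left _ _).trans_lt h₂
  have hg₁₂_sq : g₁₂ ^ 2 = σ₁ * σ₂ * s₁ := hg₁₂ ▸ Real.sq_sqrt hs₁.le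
  have hg₂₃_sq : g₂₃ ^ 2 = σ₂ * σ₃ * s₂ := hg₂₃ ▸ Real.sq_sqrt hs₂.le
  have hg₁₂_ne : g₁₂ ≠ 0 := by rw [hg₁₂]; positivity
  have hg₂₃_ne : g₂₃ ≠ 0 := by rw [hg₂₃]; positivity
  have hσ : (σ₁ * σ₂ * σ₃) ^ 2 = 1 := by
    simp only [mul_pow, sq_eq_one_iff.2 hσ₁, sq_eq_one_iff.2 hσ₂, sq_eq_one_iff.2 hσ₃, one_mul]
  have hw_re : ((σ₁ * σ₂ * σ₃ : ℝ) * ((s : ℂ) - κ.im * I)).re = σ₁ * σ₂ * σ₃ * s := by simp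
  have hw_normSq : normSq ((σ₁ * σ₂ * σ₃ : ℝ) * ((s : ℂ) - κ.im * I)) = s ^ 2 + κ.im ^ 2 := by
    rw [normSq_mul, normSq_ofReal, ← sq, hσ, one_mul]
    simp [normSq_apply, sq]
  have hsurface : (s ^ 2 + κ.im ^ 2) / ((σ₁ * σ₂ * s₁) * (σ₂ * σ₃ * s₂))
      = σ₁ * σ₃ * (2 * s - s₁ - s₂ - 2 * κ.re) := by
    rw [div_eq_iff (mul_pos hs₁ hs₂).ne']
    linear_combination heq - s₁ * s₂ * (2 * s - s₁ - s₂ - 2 * κ.re) * hσ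
  subst hG hg₁₃
  rw [Matrix.det_fin_three_of_real_offDiag_div _ _ _ _ _ _ hg₁₂_ne hg₂₃_ne, ofReal_im, ofReal_re,
    hw_re, hw_normSq, mul_pow, hg₁₂_sq, hg₂₃_sq, hsurface]
  refine ⟨rfl, ?_⟩
  linear_combination h₃

/-- Given signs `σᵢ ∈ {±1}` with at most one `+1`, `κ ∈ ℂ`, and reals
`s₁, s₂, s` satisfying the surface equation and the inequalities, the candidate Gram
matrix `G` has negative (real) determinant. -/
theorem candidate_gram_matrix_det_neg
    (σ₁ σ₂ σ₃ : ℝ)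
    (hσ₁ : σ₁ = 1 ∨ σ₁ = -1) (hσ₂ : σ₂ = 1 ∨ σ₂ = -1) (hσ₃ : σ₃ = 1 ∨ σ₃ = -1)
    (hone : ¬(σ₁ = 1 ∧ σ₂ = 1) ∧ ¬(σ₁ = 1 ∧ σ₃ = 1) ∧ ¬(σ₂ = 1 ∧ σ₃ = 1))
    (κ : ℂ) (s₁ s₂ s : ℝ)
    (heq : s₁ ^ 2 * s₂ + s₁ * s₂ ^ 2 - 2 * s₁ * s₂ * s + s ^ 2
      + (2 * κ.re) * s₁ * s₂ + (κ.im) ^ 2 = 0)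
    (h₁ : σ₁ * σ₂ * s₁ > max 0 (σ₁ * σ₂))
    (h₂ : σ₂ * σ₃ * s₂ > max 0 (σ₂ * σ₃))
    (h₃ : σ₁ * σ₂ * σ₃ * (2 * κ.re + 1) < 0)
    (g₁₂ g₂₃ : ℝ) (hg₁₂ : g₁₂ = Real.sqrt (σ₁ * σ₂ * s₁))
    (hg₂₃ : g₂₃ = Real.sqrt (σ₂ * σ₃ * s₂))
    (g₁₃ : ℂ)
    (hg₁₃ : g₁₃ = ((σ₁ * σ₂ * σ₃ : ℝ) : ℂ) * ((s : ℂ) - (κ.im : ℂ) * Complex.I)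
      / ((g₁₂ : ℂ) * (g₂₃ : ℂ)))
    (G : Matrix (Fin 3) (Fin 3) ℂ)
    (hG : G = !![(σ₁ : ℂ), (g₁₂ : ℂ), g₁₃;
                 (g₁₂ : ℂ), (σ₂ : ℂ), (g₂₃ : ℂ);
                 starRingEnd ℂ g₁₃, (g₂₃ : ℂ), (σ₃ : ℂ)]) :
    G.det.im = 0 ∧ G.det.re < 0 :=
  candidate_gram_matrix_det_neg_general σ₁ σ₂ σ₃ hσ₁ hσ₂ hσ₃ κ s₁ s₂ s heq h₁ h₂ h₃ g₁₂ g₂₃ hg₁₂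
    hg₂₃ g₁₃ hg₁₃ G hG
end
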